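/- For all positive integers s and t with s > 2, C(s,t+1) ≥ 2·C(s,t). -/
import Mathlib


/-- The function `C` of Füredi and Hajnal, defined for positive integers `s, t`:
`C(1,t) = 1`, `C(s,1) = 2` for `s > 1`, and `C(s,t) = C(s,t-1) * C(s-1, C(s,t-1))` for `s, t > 1`.
(The value at arguments equal to `0` is junk.) -/
def C : ℕ → ℕ → ℕ
  | 0, _ => 0
  | 1, _ => 1
  | _+2, 0 => 0
  | _+2, 1 => 2
  | s+2, t+2 => C (s+2) (t+1) * C (s+1) (C (s+2) (t+1))
termination_by s t => (s, t)

theorem C_pos : ∀ s t, 0 < s → 0 < t → 0 < C s t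
  | 0, _, hs, _ => absurd hs (lt_irrefl 0)
  | 1, t, _, _ => by simp [C]
  | _+2, 0, _, ht => absurd ht (lt_irrefl 0)
  | _+2, 1, _, _ => by simp [C]
  | s+2, t+2, _, _ => by
    rw [C]
    have h1 : 0 < C (s+2) (t+1) := C_pos (s+2) (t+1) (by omega) (by omega)
    have h2 : 0 < C (s+1) (C (s+2) (t+1)) := C_pos (s+1) _ (by omega) h1
    exact Nat.mul_pos h1 h2
termination_by s t => (s, t)

theorem C_ge_two : ∀ s t, 2 ≤ s → 1 ≤ t → 2 ≤ C s t
  | 0, _, hs, _ => by omega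
  | 1, _, hs, _ => by omega
  | _+2, 0, _, ht => by omega
  | _+2, 1, _, _ => by simp [C]
  | s+2, t+2, _, _ => by
    rw [C]
    have h1 : 2 ≤ C (s+2) (t+1) := C_ge_two (s+2) (t+1) (by omega) (by omega)
    have h2 : 0 < C (s+1) (C (s+2) (t+1)) := C_pos (s+1) _ (by omega) (by omega)
    calc 2 ≤ C (s+2) (t+1) * 1 := by omega
    _ ≤ C (s+2) (t+1) * C (s+1) (C (s+2) (t+1)) := Nat.mul_le_mul_left _ h2
termination_by s t => (s, t)

/-- Lemma (C-properties ii): for all positive integers `s` and `t` with `s > 2`,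
`C(s, t+1) ≥ 2 * C(s, t)`. -/
theorem C_succ_ge_two_mul (s t : ℕ) (hs : 2 < s) (ht : 0 < t) :
    2 * C s t ≤ C s (t + 1) := by
  obtain ⟨a, rfl⟩ : ∃ a, s = a + 3 := ⟨s - 3, by omega⟩
  obtain ⟨b, rfl⟩ : ∃ b, t = b + 1 := ⟨t - 1, by omega⟩
  show 2 * C (a+3) (b+1) ≤ C (a+3) (b+2)
  rw [C]
  have h1 : 1 ≤ C (a+3) (b+1) := C_pos _ _ (by omega) (by omega)
  have h2 : 2 ≤ C (a+2) (C (a+3) (b+1)) := C_ge_two _ _ (by omega) h1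
  calc 2 * C (a+3) (b+1) = C (a+3) (b+1) * 2 := by ring
  _ ≤ C (a+3) (b+1) * C (a+2) (C (a+3) (b+1)) := Nat.mul_le_mul_left _ h2
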